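/- Let p > 2, p' = p/(p-1), and let φ be the implicit function with p(1-1/p)^{p-1}(1+φ(s))^{p-2}(φ(s)-p+2) = s. Define L(s) = (1-1/p) s [ φ(s) + 1/(φ(s)-p+2) ] − (p-1)/p · s^{p/(p-1)} for s > 0. Then L(s) ≤ (p-1)^p / p for all s > 0, with equality at s = (p-1)^{p-1}. -/

import Mathlib

/-!
In the variable `x = φ s > p - 2` we have `s = ψ x`, and `x ↦ L (ψ x)` has derivative
`ψ' x * (x - (ψ x) ^ (1 / (p - 1)))` with `ψ' > 0`. Since `log x - log (ψ x) / (p - 1)` is strictly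
decreasing and vanishes at `x = p - 1`, this derivative changes sign from `+` to `-` at `p - 1`,
so `L ∘ ψ` is maximal there, i.e. at `s = ψ (p - 1) = (p - 1) ^ (p - 1)`.
-/

noncomputable def L2 (p : ℝ) (φ : ℝ → ℝ) (s : ℝ) : ℝ :=
  (1 - 1 / p) * s * (φ s + 1 / (φ s - p + 2)) - (p - 1) / p * s ^ (p / (p - 1))

open Real Set

theorem le_of_hasDerivAt_nonneg_of_nonpos {f f' : ℝ → ℝ} {a m x : ℝ}
    (hf : ∀ y, a < y → HasDerivAt f (f' y) y)
    (hleft : ∀ y, a < y → y < m → 0 ≤ f' y) (hright : ∀ y, m < y → f' y ≤ 0)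
    (ham : a < m) (hx : a < x) : f x ≤ f m := by
  have hcont : ContinuousOn f (Ioi a) := fun y hy => (hf y hy).continuousAt.continuousWithinAt
  rcases le_total x m with hxm | hmx
  · refine monotoneOn_of_hasDerivWithinAt_nonneg (f' := f') (convex_Ioc a m)
      (hcont.mono Ioc_subset_Ioi_self) (fun y hy => ?_) (fun y hy => ?_) ⟨hx, hxm⟩ ⟨ham, le_rfl⟩ hxm
    · rw [interior_Ioc] at hy
      exact (hf y hy.1).hasDerivWithinAt
    · rw [interior_Ioc] at hy
      exact hleft y hy.1 hy.2
  · refine antitoneOn_of_hasDerivWithinAt_nonpos (f' := f') (convex_Ici m)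
      (hcont.mono fun y hy => ham.trans_le hy) (fun y hy => ?_) (fun y hy => ?_)
      (mem_Ici.2 le_rfl) hmx hmx
    · rw [interior_Ici] at hy
      exact (hf y (ham.trans hy)).hasDerivWithinAt
    · rw [interior_Ici] at hy
      exact hright y hy

namespace L2

/-- The implicit equation of the statement reads `psi p (φ s) = s`. -/
noncomputable def psi (p x : ℝ) : ℝ :=
  p * (1 - 1 / p) ^ (p - 1) * (1 + x) ^ (p - 2) * (x - p + 2)

noncomputable def psiDeriv (p x : ℝ) : ℝ :=
  p * (1 - 1 / p) ^ (p - 1) * (p - 1) * (1 + x) ^ (p - 3) * (x - p + 3)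

noncomputable def Lparam (p x : ℝ) : ℝ :=
  (1 - 1 / p) * psi p x * (x + 1 / (x - p + 2)) - (p - 1) / p * psi p x ^ (p / (p - 1))

variable {p : ℝ}

theorem coeff_pos (hp : 2 < p) : 0 < p * (1 - 1 / p) ^ (p - 1) := by
  have : 0 < 1 - 1 / p := by rw [sub_pos, div_lt_one] <;> linarith
  positivity

theorem one_add_rpow_sub_two {x : ℝ} (hx : 0 < 1 + x) :
    (1 + x) ^ (p - 2) = (1 + x) ^ (p - 3) * (1 + x) := by
  rw [← rpow_add_one hx.ne']; ring_nf

theorem psi_pos {x : ℝ} (hp : 2 < p) (hx : p - 2 < x) : 0 < psi p x := by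
  have := coeff_pos hp
  have : 0 < x - p + 2 := by linarith
  have : 0 < 1 + x := by linarith
  unfold psi; positivity

theorem psiDeriv_pos {x : ℝ} (hp : 2 < p) (hx : p - 2 < x) : 0 < psiDeriv p x := by
  have := coeff_pos hp
  have : 0 < x - p + 3 := by linarith
  have : 0 < p - 1 := by linarith
  have : 0 < 1 + x := by linarith
  unfold psiDeriv; positivity

theorem hasDerivAt_psi {x : ℝ} (hp : 2 < p) (hx : p - 2 < x) :
    HasDerivAt (psi p) (psiDeriv p x) x := by
  have h1x : 0 < 1 + x := by linarith
  have hpow : HasDerivAt (fun y => (1 + y) ^ (p - 2)) ((p - 2) * (1 + x) ^ (p - 3)) x := by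
    simpa [show p - 2 - 1 = p - 3 by ring] using
      ((hasDerivAt_id x).const_add 1).rpow_const (p := p - 2) (Or.inl h1x.ne')
  refine ((hpow.const_mul (p * (1 - 1 / p) ^ (p - 1))).mul
    (((hasDerivAt_id' x).sub_const p).add_const 2)).congr_deriv ?_
  simp only [psiDeriv, one_add_rpow_sub_two h1x]; ring

theorem psi_strictMonoOn (hp : 2 < p) : StrictMonoOn (psi p) (Ioi (p - 2)) :=
  strictMonoOn_of_hasDerivWithinAt_pos (convex_Ioi _)
    (fun _ hx => (hasDerivAt_psi hp hx).continuousAt.continuousWithinAt)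
    (fun _ hx => (hasDerivAt_psi hp (interior_subset hx)).hasDerivWithinAt)
    (fun _ hx => psiDeriv_pos hp (interior_subset hx))

theorem psi_sub_one (hp : 2 < p) : psi p (p - 1) = (p - 1) ^ (p - 1) := by
  have hp0 : 0 < p := by linarith
  have hp1 : 0 < p - 1 := by linarith
  have hp_pow : p ^ (p - 2) * p = p ^ (p - 1) := by
    rw [← rpow_add_one hp0.ne']; ring_nf
  rw [psi, show 1 - 1 / p = (p - 1) / p by field_simp, div_rpow hp1.le hp0.le,
    show 1 + (p - 1) = p by ring, show p - 1 - p + 2 = 1 by ring, ← hp_pow]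
  field_simp

noncomputable def logGap (p x : ℝ) : ℝ :=
  log x - log (psi p x) / (p - 1)

theorem logGap_eq {x : ℝ} (hp : 2 < p) (hx : p - 2 < x) :
    logGap p x = log x - log (psi p x ^ (p - 1)⁻¹) := by
  rw [logGap, log_rpow (psi_pos hp hx), inv_mul_eq_div]

theorem hasDerivAt_logGap {x : ℝ} (hp : 2 < p) (hx : p - 2 < x) :
    HasDerivAt (logGap p) (x⁻¹ - psiDeriv p x / psi p x / (p - 1)) x :=
  (hasDerivAt_log (by linarith)).sub
    (((hasDerivAt_psi hp hx).log (psi_pos hp hx).ne').div_const _)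

theorem logGap_deriv_eq {x : ℝ} (hp : 2 < p) (hx : p - 2 < x) :
    x⁻¹ - psiDeriv p x / psi p x / (p - 1) = -(p - 2) / (x * (1 + x) * (x - p + 2)) := by
  have h1x : 0 < 1 + x := by linarith
  have hc := coeff_pos hp
  have hA : 0 < (1 + x) ^ (p - 3) := by positivity
  have : x ≠ 0 := by linarith
  have : x - p + 2 ≠ 0 := by linarith
  have : p - 1 ≠ 0 := by linarith
  rw [psi, psiDeriv, one_add_rpow_sub_two h1x]
  generalize p * (1 - 1 / p) ^ (p - 1) = c at *
  generalize (1 + x) ^ (p - 3) = A at *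
  field_simp
  ring

theorem logGap_strictAntiOn (hp : 2 < p) : StrictAntiOn (logGap p) (Ioi (p - 2)) := by
  refine strictAntiOn_of_hasDerivWithinAt_neg (convex_Ioi _)
    (fun x hx => (hasDerivAt_logGap hp hx).continuousAt.continuousWithinAt)
    (fun x hx => (hasDerivAt_logGap hp (interior_subset hx)).hasDerivWithinAt) fun x hx => ?_
  replace hx : p - 2 < x := interior_subset hx
  rw [logGap_deriv_eq hp hx]
  exact div_neg_of_neg_of_pos (by linarith)
    (mul_pos (mul_pos (by linarith) (by linarith)) (by linarith))

theorem logGap_sub_one (hp : 2 < p) : logGap p (p - 1) = 0 := by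
  have hp1 : 0 < p - 1 := by linarith
  rw [logGap, psi_sub_one hp, log_rpow hp1]
  field_simp
  ring

theorem psi_rpow_inv_lt_iff {x : ℝ} (hp : 2 < p) (hx : p - 2 < x) :
    psi p x ^ (p - 1)⁻¹ < x ↔ x < p - 1 := by
  rw [← log_lt_log_iff (by have := psi_pos hp hx; positivity) (by linarith), ← sub_pos,
    ← logGap_eq hp hx, ← logGap_sub_one hp,
    (logGap_strictAntiOn hp).lt_iff_gt (mem_Ioi.2 (by linarith)) (mem_Ioi.2 hx)]

theorem lt_psi_rpow_inv_iff {x : ℝ} (hp : 2 < p) (hx : p - 2 < x) :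
    x < psi p x ^ (p - 1)⁻¹ ↔ p - 1 < x := by
  rw [← log_lt_log_iff (by linarith) (by have := psi_pos hp hx; positivity), ← sub_neg,
    ← logGap_eq hp hx, ← logGap_sub_one hp,
    (logGap_strictAntiOn hp).lt_iff_gt (mem_Ioi.2 hx) (mem_Ioi.2 (by linarith))]

theorem hasDerivAt_Lparam {x : ℝ} (hp : 2 < p) (hx : p - 2 < x) :
    HasDerivAt (Lparam p) (psiDeriv p x * (x - psi p x ^ (p - 1)⁻¹)) x := by
  have hu : x - p + 2 ≠ 0 := by linarith
  have hψ := hasDerivAt_psi hp hx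
  have hrecip := (hasDerivAt_id' x).add
    ((hasDerivAt_const x 1).div (((hasDerivAt_id' x).sub_const p).add_const 2) hu)
  refine (((hψ.const_mul (1 - 1 / p)).mul hrecip).sub
    ((hψ.rpow_const (p := p / (p - 1)) (Or.inl (psi_pos hp hx).ne')).const_mul
      ((p - 1) / p))).congr_deriv ?_
  have hp0 : p ≠ 0 := by linarith
  have hp1 : p - 1 ≠ 0 := by linarith
  simp only [Pi.add_apply, Pi.div_apply]
  rw [show p / (p - 1) - 1 = (p - 1)⁻¹ by field_simp; ring]
  generalize psi p x ^ (p - 1)⁻¹ = R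
  rw [psi, psiDeriv, one_add_rpow_sub_two (by linarith)]
  field_simp
  ring

theorem Lparam_le_Lparam_sub_one {x : ℝ} (hp : 2 < p) (hx : p - 2 < x) :
    Lparam p x ≤ Lparam p (p - 1) :=
  le_of_hasDerivAt_nonneg_of_nonpos (fun _ hy => hasDerivAt_Lparam hp hy)
    (fun y hy hym => mul_nonneg (psiDeriv_pos hp hy).le
      (sub_nonneg.2 ((psi_rpow_inv_lt_iff hp hy).2 hym).le))
    (fun y hy => mul_nonpos_of_nonneg_of_nonpos (psiDeriv_pos hp (by linarith)).le
      (sub_nonpos.2 ((lt_psi_rpow_inv_iff hp (by linarith)).2 hy).le))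
    (by linarith) hx

theorem Lparam_sub_one (hp : 2 < p) : Lparam p (p - 1) = (p - 1) ^ p / p := by
  have hp0 : p ≠ 0 := by linarith
  have hp1 : 0 < p - 1 := by linarith
  have hpow : (p - 1) ^ (p - 1) * (p - 1) = (p - 1) ^ p := by
    rw [← rpow_add_one hp1.ne']; ring_nf
  rw [Lparam, psi_sub_one hp, ← rpow_mul hp1.le, show p - 1 - p + 2 = 1 by ring,
    mul_div_cancel₀ _ hp1.ne', ← hpow]
  field_simp
  ring

theorem L2_eq_Lparam {φ : ℝ → ℝ} {s : ℝ} (hs : psi p (φ s) = s) :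
    L2 p φ s = Lparam p (φ s) := by
  simp only [L2, Lparam, hs]

end L2

theorem stmt_18 (p : ℝ) (hp : 2 < p) (φ : ℝ → ℝ)
    (hφdom : ∀ s, 0 < s → p - 2 < φ s)
    (hφ : ∀ s, 0 < s →
      p * (1 - 1 / p) ^ (p - 1) * (1 + φ s) ^ (p - 2) * (φ s - p + 2) = s) :
    (∀ s, 0 < s → L2 p φ s ≤ (p - 1) ^ p / p) ∧
    L2 p φ ((p - 1) ^ (p - 1)) = (p - 1) ^ p / p := by
  refine ⟨fun s hs => ?_, ?_⟩
  · rw [L2.L2_eq_Lparam (hφ s hs), ← L2.Lparam_sub_one hp]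
    exact L2.Lparam_le_Lparam_sub_one hp (hφdom s hs)
  · have hs : 0 < (p - 1) ^ (p - 1) := rpow_pos_of_pos (by linarith) _
    have hφs : φ ((p - 1) ^ (p - 1)) = p - 1 :=
      (L2.psi_strictMonoOn hp).injOn (hφdom _ hs) (mem_Ioi.2 (by linarith))
        ((hφ _ hs).trans (L2.psi_sub_one hp).symm)
    rw [L2.L2_eq_Lparam (hφ _ hs), hφs, L2.Lparam_sub_one hp]
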